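/- arXiv:1707.01470 — 7 statements merged into one kernel-verified Lean document; each statement's English description precedes it below -/
import Mathlib

section
/- For any finite set T of points on a circle and any relation R ⊆ T², gen(gen(R)) = gen(R). -/
def arcSet (n : ℕ) (u : Fin n) (k : ℕ) : Set (Fin n) := {x | (x - u).val < k}

def gen (n : ℕ) (R : Fin n → Fin n → Prop) (s t : Fin n) : Prop :=
  ∀ (u : Fin n) (k : ℕ), s ∈ arcSet n u k → t ∉ arcSet n u k →
    ∃ s' t', s' ∈ arcSet n u k ∧ t' ∉ arcSet n u k ∧ R s' t'

/-- `gen` is idempotent: `gen (gen R) = gen R`. -/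
theorem gen_gen_eq_gen (n : ℕ) (R : Fin n → Fin n → Prop) :
    gen n (gen n R) = gen n R := by
  funext s t
  apply propext
  constructor
  · intro h u k hs ht
    obtain ⟨s', t', hs', ht', hst⟩ := h u k hs ht
    exact hst u k hs' ht'
  · intro h u k hs ht
    exact ⟨s, t, hs, ht, h⟩
end

section
/- Let T be a finite set of points on a circle and R ⊆ T². Suppose a, b, a', b' ∈ T are distinct points appearing in this cyclic order on the circle, with (a,a') ∈ R and (b,b') ∈ R. Let R' = R ∪ {(a,b')}. Then gen(R) = gen(R'). -/
/-- `a,b,c,d` are pairwise distinct and appear in this clockwise cyclic order. -/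
def cw4 (n : ℕ) (a b c d : Fin n) : Prop :=
  0 < (b - a).val ∧ (b - a).val < (c - a).val ∧ (c - a).val < (d - a).val

/-- `a,b,c,d` are pairwise distinct and appear in this cyclic order,
clockwise or counterclockwise. -/
def cyc4 (n : ℕ) (a b c d : Fin n) : Prop := cw4 n a b c d ∨ cw4 n a d c b

lemma mod_small_aux (x n : ℕ) (h : x < 2 * n) : x % n = if n ≤ x then x - n else x := by
  split
  · rw [Nat.mod_eq_sub_mod ‹_›, Nat.mod_eq_of_lt (by omega)]
  · exact Nat.mod_eq_of_lt (by omega)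

lemma key1 (n k i db da' db' : ℕ) (hi : i < n) (h1 : db < da') (h2 : da' < db')
    (h3 : db' < n) (ha : i < k) (ha' : (da' + i) % n < k) (hb' : ¬ (db' + i) % n < k) :
    (db + i) % n < k := by
  rw [mod_small_aux _ n (by omega)] at ha' hb' ⊢
  split_ifs at ha' hb' ⊢ <;> omega

lemma key2 (n k i db da' db' : ℕ) (hi : i < n) (h1 : db' < da') (h2 : da' < db)
    (h3 : db < n) (ha : i < k) (ha' : (da' + i) % n < k) (hb' : ¬ (db' + i) % n < k) :
    (db + i) % n < k := by
  rw [mod_small_aux _ n (by omega)] at ha' hb' ⊢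
  split_ifs at ha' hb' ⊢ <;> omega

lemma mem_arc_iff (n : ℕ) [NeZero n] (u a x : Fin n) (k : ℕ) :
    x ∈ arcSet n u k ↔ ((x - a).val + (a - u).val) % n < k := by
  have h : x - u = (x - a) + (a - u) := (sub_add_sub_cancel x a u).symm
  show (x - u).val < k ↔ _
  rw [h, Fin.val_add]

/-- If `a,b,a',b'` appear in this cyclic order and `(a,a'), (b,b') ∈ R`, then adding
the chord `(a,b')` does not change the generated connectivity pattern. -/
theorem gen_add_chord (n : ℕ) (R : Fin n → Fin n → Prop) (a b a' b' : Fin n)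
    (horder : cyc4 n a b a' b') (haa' : R a a') (hbb' : R b b') :
    ∀ s t, gen n R s t ↔ gen n (fun s t => R s t ∨ (s = a ∧ t = b')) s t := by
  haveI : NeZero n := ⟨a.pos.ne'⟩
  intro s t
  constructor
  · intro h u k hs ht
    obtain ⟨s', t', hs', ht', hr⟩ := h u k hs ht
    exact ⟨s', t', hs', ht', Or.inl hr⟩
  · intro h u k hs ht
    obtain ⟨s', t', hs', ht', hr⟩ := h u k hs ht
    rcases hr with hr | ⟨hea, heb⟩
    · exact ⟨s', t', hs', ht', hr⟩
    · rw [hea] at hs'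
      rw [heb] at ht'
      by_cases ha' : a' ∈ arcSet n u k
      · refine ⟨b, b', ?_, ht', hbb'⟩
        rw [mem_arc_iff n u a] at hs' ht' ha' ⊢
        have hi : (a - u).val < n := (a - u).is_lt
        have hs'' : (a - u).val < k := by
          simpa [Nat.mod_eq_of_lt hi] using hs'
        rcases horder with ⟨h1, h2, h3⟩ | ⟨h1, h2, h3⟩
        · exact key1 n k _ _ _ _ hi h2 h3 (b' - a).is_lt hs'' ha' ht'
        · exact key2 n k _ _ _ _ hi h2 h3 (b - a).is_lt hs'' ha' ht'
      · exact ⟨a, a', hs', ha', haa'⟩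
end

section
/- Let a, b, c, d, x, y, z, u be eight distinct points appearing in this clockwise order on a circle, and let R ⊆ T² contain the directed chords (a,x), (b,y), (c,z), (d,u). Let R' = (R \ {(b,y),(c,z)}) ∪ {(b,z),(c,y)}. Then every chord (s,t) with s,t ∈ T crosses at most as many chords in {(b,z),(c,y)} as in {(b,y),(c,z)}; consequently the total number of crossing pairs of chords in R' is strictly smaller than in R. -/
attribute [local instance] Classical.propDecidable

/-- Two chords cross: their endpoints are all distinct and alternate around the circle. -/
def crosses (n : ℕ) (p q : Fin n × Fin n) : Prop := cyc4 n p.1 q.1 p.2 q.2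

/-- Eight pairwise distinct points in this clockwise cyclic order. -/
def cw8 (n : ℕ) (a b c d x y z u : Fin n) : Prop :=
  0 < (b - a).val ∧ (b - a).val < (c - a).val ∧ (c - a).val < (d - a).val ∧
  (d - a).val < (x - a).val ∧ (x - a).val < (y - a).val ∧ (y - a).val < (z - a).val ∧
  (z - a).val < (u - a).val

/-- The number of (ordered) crossing pairs of chords in `R`. -/
noncomputable def numCrossings (n : ℕ) (R : Finset (Fin n × Fin n)) : ℕ :=
  ((R ×ˢ R).filter (fun p => crosses n p.1 p.2)).card

/-! Measured clockwise from the first endpoint of any chord `(s, t)`, the points `b, c, y, z`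
are still increasing up to rotation. Hence `(s, t)` crosses one of `(b, z), (c, y)` only if it
crosses one of `(b, y), (c, z)`, and both only if both. Summed over the chords of
`R \ {(b, y), (c, z)}`, the crossings with the new pair are at most those with the old pair,
while the two old chords cross each other and the two new ones do not. -/

open Finset

section RelCount

variable {α : Type*} (r : α → α → Prop) [DecidableRel r]

def relCount (A B : Finset α) : ℕ := #((A ×ˢ B).filter fun q => r q.1 q.2)

lemma relCount_eq_sum_card_filter (A B : Finset α) :
    relCount r A B = ∑ p ∈ A, #(B.filter (r p)) := by
  simp only [relCount, card_filter, sum_product]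

lemma relCount_mono_right_of_card_filter_le {B B' : Finset α}
    (h : ∀ p, #(B.filter (r p)) ≤ #(B'.filter (r p))) (A : Finset α) :
    relCount r A B ≤ relCount r A B' := by
  rw [relCount_eq_sum_card_filter, relCount_eq_sum_card_filter]
  exact sum_le_sum fun p _ => h p

lemma relCount_comm [Std.Symm r] (A B : Finset α) : relCount r A B = relCount r B A :=
  card_equiv (Equiv.prodComm α α) fun q => by
    simp only [mem_filter, mem_product, Equiv.prodComm_apply, Prod.fst_swap, Prod.snd_swap,
      Std.Symm.iff (r := r) q.1 q.2, and_comm]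

variable [DecidableEq α]

lemma relCount_union_left_le (A A' B : Finset α) :
    relCount r (A ∪ A') B ≤ relCount r A B + relCount r A' B := by
  simp only [relCount, union_product, filter_union]
  exact card_union_le _ _

lemma relCount_union_right_le (A B B' : Finset α) :
    relCount r A (B ∪ B') ≤ relCount r A B + relCount r A B' := by
  simp only [relCount, product_union, filter_union]
  exact card_union_le _ _

lemma relCount_union_left_of_disjoint {A A' : Finset α} (h : Disjoint A A') (B : Finset α) :
    relCount r (A ∪ A') B = relCount r A B + relCount r A' B := by
  simp only [relCount, union_product, filter_union]
  exact card_union_of_disjoint (disjoint_filter_filter (disjoint_product.2 (Or.inl h)))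

lemma relCount_union_right_of_disjoint (A : Finset α) {B B' : Finset α} (h : Disjoint B B') :
    relCount r A (B ∪ B') = relCount r A B + relCount r A B' := by
  simp only [relCount, product_union, filter_union]
  exact card_union_of_disjoint (disjoint_filter_filter (disjoint_product.2 (Or.inr h)))

theorem relCount_sdiff_union_lt [Std.Symm r] {R O N : Finset α} (hO : O ⊆ R)
    (hrow : ∀ p, #(N.filter (r p)) ≤ #(O.filter (r p)))
    (hcore : relCount r N N < relCount r O O) :
    relCount r (R \ O ∪ N) (R \ O ∪ N) < relCount r R R := by
  set S := R \ O
  have hSO : relCount r S N ≤ relCount r S O := relCount_mono_right_of_card_filter_le r hrow S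
  have hR : relCount r R R = relCount r S S + 2 * relCount r S O + relCount r O O := by
    rw [← sdiff_union_of_subset hO, relCount_union_left_of_disjoint r sdiff_disjoint,
      relCount_union_right_of_disjoint r _ sdiff_disjoint,
      relCount_union_right_of_disjoint r _ sdiff_disjoint, relCount_comm r O S]
    ring
  have hSN := relCount_union_right_le r S S N
  have hNS := relCount_union_right_le r N S N
  rw [relCount_comm r N S] at hNS
  have := relCount_union_left_le r S N (S ∪ N)
  omega

end RelCount

namespace Fin

lemma val_sub_self {n : ℕ} (p : Fin n) : (p - p).val = 0 := by
  rw [sub_def]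
  simp

lemma val_sub_rebase {n : ℕ} (p q x : Fin n) :
    (q - p).val ≤ (x - p).val ∧ (x - q).val = (x - p).val - (q - p).val ∨
    (x - p).val < (q - p).val ∧ (x - q).val = n + (x - p).val - (q - p).val := by
  have : NeZero n := ⟨by have := x.pos; omega⟩
  rw [← sub_sub_sub_cancel_right x q p]
  rcases le_or_gt (q - p).val (x - p).val with h | h
  · exact .inl ⟨h, sub_val_of_le h⟩
  · exact .inr ⟨h, coe_sub_iff_lt.2 h⟩

end Fin

variable {n : ℕ}

lemma cw4_rotate {p q r w : Fin n} (h : cw4 n p q r w) : cw4 n q r w p := by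
  obtain ⟨hq, hqr, hrw⟩ := h
  have := Fin.val_sub_rebase p q r
  have := Fin.val_sub_rebase p q w
  have := Fin.val_sub_rebase p q p
  have := (w - p).is_lt
  rw [Fin.val_sub_self] at *
  refine ⟨?_, ?_, ?_⟩ <;> omega

lemma crosses_symm {p q : Fin n × Fin n} (h : crosses n p q) : crosses n q p := by
  rcases h with h | h
  · exact .inr (cw4_rotate h)
  · exact .inl (cw4_rotate (cw4_rotate (cw4_rotate h)))

instance : Std.Symm (crosses n) := ⟨fun _ _ => crosses_symm⟩

lemma not_crosses_self (p : Fin n × Fin n) : ¬ crosses n p p := by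
  rintro (⟨h, -⟩ | ⟨-, h, -⟩)
  · exact (Fin.val_sub_self p.1 ▸ h).false
  · exact h.false

lemma cw4_of_cw8 {a b c d x y z u : Fin n} (h : cw8 n a b c d x y z u) : cw4 n b c y z := by
  obtain ⟨hb, hbc, hcd, hdx, hxy, hyz, -⟩ := h
  have := Fin.val_sub_rebase a b c
  have := Fin.val_sub_rebase a b y
  have := Fin.val_sub_rebase a b z
  refine ⟨?_, ?_, ?_⟩ <;> omega

def CyclicallyIncreasing (B C Y Z : ℕ) : Prop :=
  (B < C ∧ C < Y ∧ Y < Z) ∨ (C < Y ∧ Y < Z ∧ Z < B) ∨ (Y < Z ∧ Z < B ∧ B < C) ∨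
    (Z < B ∧ B < C ∧ C < Y)

lemma cw4.cyclicallyIncreasing_sub {b c y z : Fin n} (h : cw4 n b c y z) (s : Fin n) :
    CyclicallyIncreasing (b - s).val (c - s).val (y - s).val (z - s).val := by
  obtain ⟨hc, hcy, hyz⟩ := h
  have := Fin.val_sub_rebase b s b
  have := Fin.val_sub_rebase b s c
  have := Fin.val_sub_rebase b s y
  have := Fin.val_sub_rebase b s z
  have := (z - b).is_lt
  rw [Fin.val_sub_self] at *
  unfold CyclicallyIncreasing
  omega

/-- With clockwise distances measured from `s`, the chord from `s` to the point at distance `T`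
separates the points at distances `P` and `Q`. -/
def Separates (T P Q : ℕ) : Prop := (0 < P ∧ P < T ∧ T < Q) ∨ (0 < Q ∧ Q < T ∧ T < P)

lemma crosses_iff_separates (p q : Fin n × Fin n) :
    crosses n p q ↔ Separates (p.2 - p.1).val (q.1 - p.1).val (q.2 - p.1).val :=
  Iff.rfl

lemma CyclicallyIncreasing.separates_count_le {B C Y Z : ℕ} (h : CyclicallyIncreasing B C Y Z)
    (T : ℕ) :
    (if Separates T B Z then 1 else 0) + (if Separates T C Y then 1 else 0) ≤
      (if Separates T B Y then 1 else 0) + (if Separates T C Z then 1 else 0) := by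
  unfold CyclicallyIncreasing at h
  unfold Separates
  split_ifs <;> omega

lemma cw4.card_filter_crosses_uncross_le {b c y z : Fin n} (h : cw4 n b c y z)
    (p : Fin n × Fin n) :
    #(({(b, z), (c, y)} : Finset (Fin n × Fin n)).filter (crosses n p)) ≤
      #(({(b, y), (c, z)} : Finset (Fin n × Fin n)).filter (crosses n p)) := by
  have hbc : b ≠ c := by
    rintro rfl
    exact h.1.ne' (Fin.val_sub_self b)
  rw [card_filter, card_filter, sum_pair (by simp [hbc]), sum_pair (by simp [hbc])]
  simp only [crosses_iff_separates]
  exact (h.cyclicallyIncreasing_sub p.1).separates_count_le _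

lemma cw4.relCount_crosses_uncross_lt {b c y z : Fin n} (h : cw4 n b c y z) :
    relCount (crosses n) {(b, z), (c, y)} {(b, z), (c, y)} <
      relCount (crosses n) {(b, y), (c, z)} {(b, y), (c, z)} := by
  have hnew : ¬ crosses n (b, z) (c, y) := by
    obtain ⟨hc, hcy, hyz⟩ := h
    show ¬ (cw4 n b c z y ∨ cw4 n b y z c)
    rintro (⟨-, -, h⟩ | ⟨-, -, h⟩) <;> omega
  have hzero : relCount (crosses n) {(b, z), (c, y)} {(b, z), (c, y)} = 0 := by
    refine card_eq_zero.2 (filter_eq_empty_iff.2 ?_)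
    simp only [mem_product, mem_insert, mem_singleton]
    rintro ⟨p, q⟩ ⟨rfl | rfl, rfl | rfl⟩
    exacts [not_crosses_self _, hnew, fun h' => hnew (crosses_symm h'), not_crosses_self _]
  rw [hzero]
  exact card_pos.2 ⟨((b, y), (c, z)), mem_filter.2 ⟨by simp, Or.inl h⟩⟩

theorem uncross_decreases_crossings_general (n : ℕ) (R : Finset (Fin n × Fin n))
    (a b c d x y z u : Fin n) (horder : cw8 n a b c d x y z u)
    (hby : (b, y) ∈ R) (hcz : (c, z) ∈ R) :
    (∀ p : Fin n × Fin n,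
      (({(b, z), (c, y)} : Finset (Fin n × Fin n)).filter (fun q => crosses n p q)).card ≤
      (({(b, y), (c, z)} : Finset (Fin n × Fin n)).filter (fun q => crosses n p q)).card) ∧
    numCrossings n ((R \ {(b, y), (c, z)}) ∪ {(b, z), (c, y)}) < numCrossings n R := by
  have h := cw4_of_cw8 horder
  exact ⟨h.card_filter_crosses_uncross_le,
    relCount_sdiff_union_lt (crosses n) (insert_subset hby (singleton_subset_iff.2 hcz))
      h.card_filter_crosses_uncross_le h.relCount_crosses_uncross_lt⟩

/-- Uncrossing `(b,y),(c,z)` into `(b,z),(c,y)`: every chord crosses at most as many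
chords of the new pair as of the old pair, and the total number of crossings
strictly decreases. -/
theorem uncross_decreases_crossings (n : ℕ) (R : Finset (Fin n × Fin n))
    (a b c d x y z u : Fin n) (horder : cw8 n a b c d x y z u)
    (hax : (a, x) ∈ R) (hby : (b, y) ∈ R) (hcz : (c, z) ∈ R) (hdu : (d, u) ∈ R) :
    (∀ p : Fin n × Fin n,
      (({(b, z), (c, y)} : Finset (Fin n × Fin n)).filter (fun q => crosses n p q)).card ≤
      (({(b, y), (c, z)} : Finset (Fin n × Fin n)).filter (fun q => crosses n p q)).card) ∧
    numCrossings n ((R \ {(b, y), (c, z)}) ∪ {(b, z), (c, y)}) < numCrossings n R :=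
  uncross_decreases_crossings_general n R a b c d x y z u horder hby hcz
end

section
/- Let H be a set of directed chords of a circle (ordered pairs of distinct points) containing 7 pairwise crossing chords. Then there exist pairwise distinct points a, b, c, d, x, y, z, u appearing in this clockwise order on the circle such that (a,x), (b,y), (c,z), (d,u) are chords of H (and these four chords are pairwise crossing). -/
lemma sub_val' {n : ℕ} (x a : Fin n) :
    (x - a).val = if a.val ≤ x.val then x.val - a.val else x.val + n - a.val := by
  have hx := x.isLt; have ha := a.isLt
  rw [Fin.sub_def]
  simp only []
  rcases le_or_gt a.val x.val with h | h
  · rw [if_pos h]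
    have : (n - a.val + x.val) = (x.val - a.val) + n := by omega
    rw [this, Nat.add_mod_right, Nat.mod_eq_of_lt (by omega)]
  · rw [if_neg (by omega), Nat.mod_eq_of_lt (by omega)]
    omega

lemma cyc4_ne {n : ℕ} {a b c d : Fin n} (h : cyc4 n a b c d) :
    a ≠ b ∧ a ≠ c ∧ a ≠ d ∧ b ≠ c ∧ b ≠ d ∧ c ≠ d := by
  have ha := a.isLt; have hb := b.isLt; have hc := c.isLt; have hd := d.isLt
  rcases h with h | h <;> obtain ⟨h1, h2, h3⟩ := h <;>
    simp only [sub_val'] at h1 h2 h3 <;>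
    simp only [ne_eq, ← Fin.val_eq_val] <;>
    split_ifs at h1 h2 h3 <;> omega

lemma cross_one {n : ℕ} {a x b y : Fin n} (h : cyc4 n a b x y) :
    ((min a.val x.val < b.val ∧ b.val < max a.val x.val) ∧
     ¬(min a.val x.val < y.val ∧ y.val < max a.val x.val)) ∨
    (¬(min a.val x.val < b.val ∧ b.val < max a.val x.val) ∧
     (min a.val x.val < y.val ∧ y.val < max a.val x.val)) := by
  have hx := x.isLt; have ha := a.isLt; have hb := b.isLt; have hy := y.isLt
  rcases h with h | h <;> obtain ⟨h1, h2, h3⟩ := h <;>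
    simp only [sub_val'] at h1 h2 h3 <;>
    split_ifs at h1 h2 h3 <;> omega

/-- The finset of endpoints of chords in `S`. -/
def Efin (n : ℕ) (S : Finset (Fin n × Fin n)) : Finset (Fin n) :=
  S.biUnion fun p => {p.1, p.2}

/-- The rank of a point among endpoints of chords in `S` (by `Fin.val`). -/
def rk (n : ℕ) (S : Finset (Fin n × Fin n)) (v : Fin n) : ℕ :=
  ((Efin n S).filter (fun w => w.val < v.val)).card

section AuxMain
variable {n : ℕ} {S : Finset (Fin n × Fin n)}

lemma endpoints_ne (hScross : (S : Set (Fin n × Fin n)).Pairwise (crosses n))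
    {p q : Fin n × Fin n} (hp : p ∈ S) (hq : q ∈ S) (hne : p ≠ q) :
    p.1 ≠ q.1 ∧ p.1 ≠ q.2 ∧ p.2 ≠ q.1 ∧ p.2 ≠ q.2 := by
  have h := hScross (Finset.mem_coe.mpr hp) (Finset.mem_coe.mpr hq) hne
  obtain ⟨h1, h2, h3, h4, h5, h6⟩ := cyc4_ne h
  exact ⟨h1, h3, h4.symm, h6⟩

lemma pair_disjoint (hScross : (S : Set (Fin n × Fin n)).Pairwise (crosses n)) :
    ∀ p ∈ S, ∀ q ∈ S, p ≠ q →
      Disjoint ({p.1, p.2} : Finset (Fin n)) ({q.1, q.2} : Finset (Fin n)) := by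
  intro p hp q hq hne
  obtain ⟨h1, h2, h3, h4⟩ := endpoints_ne hScross hp hq hne
  rw [Finset.disjoint_left]
  intro w hw hw'
  simp only [Finset.mem_insert, Finset.mem_singleton] at hw hw'
  rcases hw with rfl | rfl <;> rcases hw' with e | e <;> tauto

lemma Efin_card (hScross : (S : Set (Fin n × Fin n)).Pairwise (crosses n))
    (hSne : ∀ p ∈ S, p.1 ≠ p.2) (hScard : S.card = 7) : (Efin n S).card = 14 := by
  rw [Efin, Finset.card_biUnion (pair_disjoint hScross)]
  have : ∀ p ∈ S, ({p.1, p.2} : Finset (Fin n)).card = 2 := by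
    intro p hp
    rw [Finset.card_insert_of_notMem (by simp [hSne p hp]), Finset.card_singleton]
  rw [Finset.sum_congr rfl this, Finset.sum_const, hScard, smul_eq_mul]

lemma mem_Efin {p : Fin n × Fin n} (hp : p ∈ S) : p.1 ∈ Efin n S ∧ p.2 ∈ Efin n S := by
  constructor <;> exact Finset.mem_biUnion.mpr ⟨p, hp, by simp⟩

lemma rk_mono {v w : Fin n} (hv : v ∈ Efin n S) (hvw : v.val < w.val) :
    rk n S v < rk n S w := by
  apply Finset.card_lt_card
  rw [Finset.ssubset_iff_of_subset]
  · exact ⟨v, Finset.mem_filter.mpr ⟨hv, hvw⟩, by simp⟩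
  · intro u hu
    rw [Finset.mem_filter] at hu ⊢
    exact ⟨hu.1, by omega⟩

lemma rk_lt_iff {v w : Fin n} (hv : v ∈ Efin n S) (hw : w ∈ Efin n S) :
    rk n S v < rk n S w ↔ v.val < w.val := by
  constructor
  · intro h
    rcases lt_trichotomy v.val w.val with h1 | h1 | h1
    · exact h1
    · rw [Fin.val_injective h1] at h; omega
    · exact absurd (rk_mono hw h1) (by omega)
  · exact rk_mono hv

lemma rk_le (hScross : (S : Set (Fin n × Fin n)).Pairwise (crosses n))
    (hSne : ∀ p ∈ S, p.1 ≠ p.2) (hScard : S.card = 7)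
    {v : Fin n} (hv : v ∈ Efin n S) : rk n S v ≤ 13 := by
  have h1 : (Efin n S).filter (fun w => w.val < v.val) ⊆ (Efin n S).erase v := by
    intro u hu
    rw [Finset.mem_filter] at hu
    exact Finset.mem_erase.mpr ⟨fun e => by subst e; omega, hu.1⟩
  have := Finset.card_le_card h1
  rw [Finset.card_erase_of_mem hv, Efin_card hScross hSne hScard] at this
  exact le_trans this (by norm_num)

lemma count_between (hScross : (S : Set (Fin n × Fin n)).Pairwise (crosses n))
    (hScard : S.card = 7) {p : Fin n × Fin n} (hp : p ∈ S) :
    ((Efin n S).filter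
      (fun w => min p.1.val p.2.val < w.val ∧ w.val < max p.1.val p.2.val)).card = 6 := by
  classical
  set pr : Fin n → Prop := fun w => min p.1.val p.2.val < w.val ∧ w.val < max p.1.val p.2.val
    with hpr
  have hfil : (Efin n S).filter pr
      = S.biUnion (fun q => ({q.1, q.2} : Finset (Fin n)).filter pr) :=
    Finset.filter_biUnion _ _ _
  rw [hfil, Finset.card_biUnion (fun q hq r hr hne =>
    Finset.disjoint_filter_filter (pair_disjoint hScross q hq r hr hne))]
  rw [← Finset.add_sum_erase _ _ hp]
  have h0 : (({p.1, p.2} : Finset (Fin n)).filter pr).card = 0 := by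
    rw [Finset.card_eq_zero, Finset.filter_eq_empty_iff]
    intro w hw
    simp only [Finset.mem_insert, Finset.mem_singleton] at hw
    rcases hw with rfl | rfl <;> simp only [hpr] <;> omega
  have h1 : ∀ q ∈ S.erase p, (({q.1, q.2} : Finset (Fin n)).filter pr).card = 1 := by
    intro q hq
    obtain ⟨hne, hqS⟩ := Finset.mem_erase.mp hq
    have hcr := hScross (Finset.mem_coe.mpr hp) (Finset.mem_coe.mpr hqS) (Ne.symm hne)
    rcases cross_one hcr with ⟨hb, hy⟩ | ⟨hb, hy⟩
    · have : ({q.1, q.2} : Finset (Fin n)).filter pr = {q.1} := by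
        rw [show ({q.1, q.2} : Finset (Fin n)) = insert q.1 {q.2} from rfl,
          Finset.filter_insert, if_pos hb, Finset.filter_singleton, if_neg hy]
        simp
      rw [this, Finset.card_singleton]
    · have : ({q.1, q.2} : Finset (Fin n)).filter pr = {q.2} := by
        rw [show ({q.1, q.2} : Finset (Fin n)) = insert q.1 {q.2} from rfl,
          Finset.filter_insert, if_neg hb, Finset.filter_singleton, if_pos hy]
      rw [this, Finset.card_singleton]
  rw [h0, Finset.sum_congr rfl h1, Finset.sum_const, Finset.card_erase_of_mem hp, hScard,
    smul_eq_mul]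

lemma rank_jump (hScross : (S : Set (Fin n × Fin n)).Pairwise (crosses n))
    (hScard : S.card = 7) {p : Fin n × Fin n} (hp : p ∈ S)
    {l h : Fin n} (hlE : l ∈ Efin n S)
    (hl : l.val = min p.1.val p.2.val) (hh : h.val = max p.1.val p.2.val)
    (hlh : l.val < h.val) :
    rk n S h = rk n S l + 7 := by
  classical
  have key : (Efin n S).filter (fun w => w.val < h.val) =
      ((Efin n S).filter (fun w => w.val < l.val) ∪ {l}) ∪
        (Efin n S).filter
          (fun w => min p.1.val p.2.val < w.val ∧ w.val < max p.1.val p.2.val) := by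
    ext w
    simp only [Finset.mem_union, Finset.mem_filter, Finset.mem_singleton]
    constructor
    · rintro ⟨hw, hwlt⟩
      rcases lt_trichotomy w.val l.val with h1 | h1 | h1
      · exact Or.inl (Or.inl ⟨hw, h1⟩)
      · exact Or.inl (Or.inr (Fin.val_injective h1))
      · exact Or.inr ⟨hw, by omega, by omega⟩
    · rintro ((⟨hw, h1⟩ | rfl) | ⟨hw, h1, h2⟩)
      · exact ⟨hw, by omega⟩
      · exact ⟨hlE, hlh⟩
      · exact ⟨hw, by omega⟩
  have d1 : Disjoint ((Efin n S).filter (fun w => w.val < l.val)) ({l} : Finset (Fin n)) := by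
    rw [Finset.disjoint_singleton_right, Finset.mem_filter]
    omega
  have d2 : Disjoint ((Efin n S).filter (fun w => w.val < l.val) ∪ {l})
      ((Efin n S).filter
        (fun w => min p.1.val p.2.val < w.val ∧ w.val < max p.1.val p.2.val)) := by
    rw [Finset.disjoint_left]
    intro w hw hw'
    simp only [Finset.mem_union, Finset.mem_filter, Finset.mem_singleton] at hw hw'
    rcases hw with ⟨_, h1⟩ | rfl <;> omega
  rw [rk, key, Finset.card_union_of_disjoint d2, Finset.card_union_of_disjoint d1,
    Finset.card_singleton, count_between hScross hScard hp, rk]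

end AuxMain

lemma pick4 {α : Type*} [DecidableEq α] {S : Finset α} (key : α → ℕ)
    (hinj : ∀ p ∈ S, ∀ q ∈ S, key p = key q → p = q)
    {U : Finset α} (hU : U ⊆ S) (hcard : 4 ≤ U.card) :
    ∃ p1 ∈ U, ∃ p2 ∈ U, ∃ p3 ∈ U, ∃ p4 ∈ U,
      key p1 < key p2 ∧ key p2 < key p3 ∧ key p3 < key p4 := by
  obtain ⟨V, hVU, hV4⟩ := Finset.exists_subset_card_eq hcard
  have hinjV : Set.InjOn key V := fun p hp q hq h =>
    hinj p (hU (hVU hp)) q (hU (hVU hq)) h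
  have hJ : (V.image key).card = 4 := by rw [Finset.card_image_of_injOn hinjV, hV4]
  let e := (V.image key).orderIsoOfFin hJ
  obtain ⟨p1, hp1, hk1⟩ := Finset.mem_image.mp (e ⟨0, by norm_num⟩).2
  obtain ⟨p2, hp2, hk2⟩ := Finset.mem_image.mp (e ⟨1, by norm_num⟩).2
  obtain ⟨p3, hp3, hk3⟩ := Finset.mem_image.mp (e ⟨2, by norm_num⟩).2
  obtain ⟨p4, hp4, hk4⟩ := Finset.mem_image.mp (e ⟨3, by norm_num⟩).2
  refine ⟨p1, hVU hp1, p2, hVU hp2, p3, hVU hp3, p4, hVU hp4, ?_, ?_, ?_⟩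
  · rw [hk1, hk2]; exact Subtype.coe_lt_coe.mpr (e.strictMono (by decide))
  · rw [hk2, hk3]; exact Subtype.coe_lt_coe.mpr (e.strictMono (by decide))
  · rw [hk3, hk4]; exact Subtype.coe_lt_coe.mpr (e.strictMono (by decide))

/-- If a set `H` of directed chords contains `7` pairwise crossing chords, then there are
distinct points `a,b,c,d,x,y,z,u` in this clockwise order such that
`(a,x),(b,y),(c,z),(d,u)` are pairwise crossing chords of `H`. -/
theorem seven_crossing_chords (n : ℕ) (H : Set (Fin n × Fin n))
    (hdist : ∀ p ∈ H, p.1 ≠ p.2)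
    (S : Finset (Fin n × Fin n)) (hSH : ↑S ⊆ H) (hScard : S.card = 7)
    (hScross : (S : Set (Fin n × Fin n)).Pairwise (crosses n)) :
    ∃ a b c d x y z u : Fin n, cw8 n a b c d x y z u ∧
      (a, x) ∈ H ∧ (b, y) ∈ H ∧ (c, z) ∈ H ∧ (d, u) ∈ H ∧
      ({(a, x), (b, y), (c, z), (d, u)} : Set (Fin n × Fin n)).Pairwise (crosses n) := by
  classical
  have hSne : ∀ p ∈ S, p.1 ≠ p.2 := fun p hp => hdist p (hSH hp)
  -- the key (rank of tail) is injective on S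
  have hkeyinj : ∀ p ∈ S, ∀ q ∈ S, rk n S p.1 = rk n S q.1 → p = q := by
    intro p hp q hq h
    by_contra hne
    have h1 := (endpoints_ne hScross hp hq hne).1
    have hpE := (mem_Efin hp).1
    have hqE := (mem_Efin hq).1
    have hv : p.1.val ≠ q.1.val := fun e => h1 (Fin.val_injective e)
    rcases Nat.lt_or_ge p.1.val q.1.val with hlt | hge
    · have := rk_mono (S := S) hpE hlt; omega
    · have := rk_mono (S := S) hqE (by omega : q.1.val < p.1.val); omega
  have hsplit := Finset.card_filter_add_card_filter_not
    (s := S) (p := fun p => p.1.val < p.2.val)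
  rcases le_or_gt 4 (S.filter (fun p => p.1.val < p.2.val)).card with hT | hT
  · -- Case A : at least four chords have tail before head
    obtain ⟨p1, h1, p2, h2, p3, h3, p4, h4, k12, k23, k34⟩ :=
      pick4 (fun p => rk n S p.1) hkeyinj (Finset.filter_subset _ S) hT
    rw [Finset.mem_filter] at h1 h2 h3 h4
    obtain ⟨h1S, h1o⟩ := h1; obtain ⟨h2S, h2o⟩ := h2
    obtain ⟨h3S, h3o⟩ := h3; obtain ⟨h4S, h4o⟩ := h4
    have e1 := (mem_Efin h1S); have e2 := (mem_Efin h2S)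
    have e3 := (mem_Efin h3S); have e4 := (mem_Efin h4S)
    have j1 : rk n S p1.2 = rk n S p1.1 + 7 :=
      rank_jump hScross hScard h1S e1.1 (by omega) (by omega) h1o
    have j2 : rk n S p2.2 = rk n S p2.1 + 7 :=
      rank_jump hScross hScard h2S e2.1 (by omega) (by omega) h2o
    have j3 : rk n S p3.2 = rk n S p3.1 + 7 :=
      rank_jump hScross hScard h3S e3.1 (by omega) (by omega) h3o
    have j4 : rk n S p4.2 = rk n S p4.1 + 7 :=
      rank_jump hScross hScard h4S e4.1 (by omega) (by omega) h4o
    have b1 := rk_le hScross hSne hScard e1.2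
    have b4 := rk_le hScross hSne hScard e4.2
    -- value chain
    have vab : p1.1.val < p2.1.val := (rk_lt_iff e1.1 e2.1).mp k12
    have vbc : p2.1.val < p3.1.val := (rk_lt_iff e2.1 e3.1).mp k23
    have vcd : p3.1.val < p4.1.val := (rk_lt_iff e3.1 e4.1).mp k34
    have vdx : p4.1.val < p1.2.val := (rk_lt_iff e4.1 e1.2).mp (by omega)
    have vxy : p1.2.val < p2.2.val := (rk_lt_iff e1.2 e2.2).mp (by omega)
    have vyz : p2.2.val < p3.2.val := (rk_lt_iff e2.2 e3.2).mp (by omega)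
    have vzu : p3.2.val < p4.2.val := (rk_lt_iff e3.2 e4.2).mp (by omega)
    refine ⟨p1.1, p2.1, p3.1, p4.1, p1.2, p2.2, p3.2, p4.2, ?_,
      hSH h1S, hSH h2S, hSH h3S, hSH h4S, ?_⟩
    · have i1 := p1.1.isLt; have i2 := p4.2.isLt
      simp only [cw8, sub_val']
      split_ifs <;> omega
    · refine Set.Pairwise.mono ?_ hScross
      intro q hq
      simp only [Set.mem_insert_iff, Set.mem_singleton_iff] at hq
      rcases hq with rfl | rfl | rfl | rfl <;>
        simpa using Finset.mem_coe.mpr (by assumption)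
  · -- Case B : at least four chords have head before tail
    have hU : 4 ≤ (S.filter (fun p => ¬ p.1.val < p.2.val)).card := by omega
    obtain ⟨p1, h1, p2, h2, p3, h3, p4, h4, k12, k23, k34⟩ :=
      pick4 (fun p => rk n S p.1) hkeyinj (Finset.filter_subset _ S) hU
    rw [Finset.mem_filter] at h1 h2 h3 h4
    obtain ⟨h1S, h1o'⟩ := h1; obtain ⟨h2S, h2o'⟩ := h2
    obtain ⟨h3S, h3o'⟩ := h3; obtain ⟨h4S, h4o'⟩ := h4
    have h1o : p1.2.val < p1.1.val := by
      rcases Nat.lt_or_ge p1.2.val p1.1.val with h | h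
      · exact h
      · exact absurd (Fin.val_injective (by omega : p1.1.val = p1.2.val)) (hSne p1 h1S)
    have h2o : p2.2.val < p2.1.val := by
      rcases Nat.lt_or_ge p2.2.val p2.1.val with h | h
      · exact h
      · exact absurd (Fin.val_injective (by omega : p2.1.val = p2.2.val)) (hSne p2 h2S)
    have h3o : p3.2.val < p3.1.val := by
      rcases Nat.lt_or_ge p3.2.val p3.1.val with h | h
      · exact h
      · exact absurd (Fin.val_injective (by omega : p3.1.val = p3.2.val)) (hSne p3 h3S)
    have h4o : p4.2.val < p4.1.val := by
      rcases Nat.lt_or_ge p4.2.val p4.1.val with h | h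
      · exact h
      · exact absurd (Fin.val_injective (by omega : p4.1.val = p4.2.val)) (hSne p4 h4S)
    have e1 := (mem_Efin h1S); have e2 := (mem_Efin h2S)
    have e3 := (mem_Efin h3S); have e4 := (mem_Efin h4S)
    have j1 : rk n S p1.1 = rk n S p1.2 + 7 :=
      rank_jump hScross hScard h1S e1.2 (by omega) (by omega) h1o
    have j2 : rk n S p2.1 = rk n S p2.2 + 7 :=
      rank_jump hScross hScard h2S e2.2 (by omega) (by omega) h2o
    have j3 : rk n S p3.1 = rk n S p3.2 + 7 :=
      rank_jump hScross hScard h3S e3.2 (by omega) (by omega) h3o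
    have j4 : rk n S p4.1 = rk n S p4.2 + 7 :=
      rank_jump hScross hScard h4S e4.2 (by omega) (by omega) h4o
    have b1 := rk_le hScross hSne hScard e1.1
    have b4 := rk_le hScross hSne hScard e4.1
    -- value chain : x < y < z < u < a < b < c < d  (vals)
    have vab : p1.1.val < p2.1.val := (rk_lt_iff e1.1 e2.1).mp k12
    have vbc : p2.1.val < p3.1.val := (rk_lt_iff e2.1 e3.1).mp k23
    have vcd : p3.1.val < p4.1.val := (rk_lt_iff e3.1 e4.1).mp k34
    have vxy : p1.2.val < p2.2.val := (rk_lt_iff e1.2 e2.2).mp (by omega)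
    have vyz : p2.2.val < p3.2.val := (rk_lt_iff e2.2 e3.2).mp (by omega)
    have vzu : p3.2.val < p4.2.val := (rk_lt_iff e3.2 e4.2).mp (by omega)
    have vua : p4.2.val < p1.1.val := (rk_lt_iff e4.2 e1.1).mp (by omega)
    refine ⟨p1.1, p2.1, p3.1, p4.1, p1.2, p2.2, p3.2, p4.2, ?_,
      hSH h1S, hSH h2S, hSH h3S, hSH h4S, ?_⟩
    · have i1 := p1.1.isLt; have i2 := p4.1.isLt; have i3 := p1.2.isLt
      have i4 := p4.2.isLt
      simp only [cw8, sub_val']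
      split_ifs <;> omega
    · refine Set.Pairwise.mono ?_ hScross
      intro q hq
      simp only [Set.mem_insert_iff, Set.mem_singleton_iff] at hq
      rcases hq with rfl | rfl | rfl | rfl <;>
        simpa using Finset.mem_coe.mpr (by assumption)
end

section
/- Let V be a set of 7 pairwise crossing chords of a circle. Then there is a partition of the circle into two disjoint arcs X₁, X₂ and a subset V₁ ⊆ V of 4 chords such that every chord in V₁ has its tail in X₁ and its head in X₂. -/
lemma key_sub_val (n : ℕ) (y c : Fin n) (hc : 0 < c.val) :
    (y - c).val < n - c.val ↔ c.val ≤ y.val := by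
  have hC := c.isLt; have hY := y.isLt
  simp only [Fin.sub_def]
  rcases lt_or_ge y.val c.val with h | h
  · rw [Nat.mod_eq_of_lt (by omega)]; omega
  · rw [Nat.mod_eq_sub_mod (by omega), Nat.mod_eq_of_lt (by omega)]; omega

/-- Given `7` pairwise crossing chords, there is a partition of the circle into two arcs
`(arcSet n u k, (arcSet n u k)ᶜ)` and `4` of the chords, each with tail in the first arc
and head in the second (complementary) arc. -/
theorem four_chords_tails_in_arc (n : ℕ) (V : Finset (Fin n × Fin n))
    (hcard : V.card = 7)
    (hcross : (V : Set (Fin n × Fin n)).Pairwise (crosses n)) :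
    ∃ (u : Fin n) (k : ℕ) (V₁ : Finset (Fin n × Fin n)),
      V₁ ⊆ V ∧ V₁.card = 4 ∧
      ∀ p ∈ V₁, p.1 ∈ arcSet n u k ∧ p.2 ∉ arcSet n u k := by
  have hVne : V.Nonempty := by rw [← Finset.card_pos, hcard]; norm_num
  obtain ⟨⟨a, b⟩, hp₀⟩ := hVne
  haveI : NeZero n := ⟨a.pos.ne'⟩
  set k := (b - a).val with hk
  -- there is another chord
  have h2 : ∃ q ∈ V, q ≠ (a, b) := by
    by_contra h
    push_neg at h
    have hs : V ⊆ {(a, b)} := fun q hq => Finset.mem_singleton.mpr (h q hq)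
    have := Finset.card_le_card hs
    simp [hcard] at this
  obtain ⟨q₀, hq₀, hq₀ne⟩ := h2
  have hkpos : 0 < k := by
    have hc := hcross hp₀ hq₀ (Ne.symm hq₀ne)
    simp only [crosses, cyc4, cw4] at hc
    rcases hc with ⟨h1, h2, h3⟩ | ⟨h1, h2, h3⟩ <;> rw [← hk] at h2 <;> omega
  -- alternation: every other chord has exactly one endpoint in the arc from a to b
  have halt : ∀ q ∈ V, q ≠ (a, b) →
      ((q.1 - a).val < k ∧ ¬ (q.2 - a).val < k) ∨
      ((q.2 - a).val < k ∧ ¬ (q.1 - a).val < k) := by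
    intro q hq hne'
    have hc := hcross hp₀ hq (Ne.symm hne')
    simp only [crosses, cyc4, cw4] at hc
    rcases hc with ⟨h1, h2, h3⟩ | ⟨h1, h2, h3⟩ <;>
      rw [← hk] at h2 h3
    · left; omega
    · right; omega
  -- the complementary arc
  have harc : ∀ x : Fin n, (x - b).val < n - k ↔ k ≤ (x - a).val := by
    intro x
    have h := key_sub_val n (x - a) (b - a) (by omega)
    rwa [sub_sub_sub_cancel_right] at h
  classical
  set S₁ := V.filter (fun q => (q.1 - a).val < k) with hS₁
  set S₂ := V.filter (fun q => ¬ (q.1 - a).val < k) with hS₂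
  have hsplit : S₁.card + S₂.card = 7 := by
    rw [hS₁, hS₂, Finset.card_filter_add_card_filter_not, hcard]
  rcases (by omega : 4 ≤ S₁.card ∨ 4 ≤ S₂.card) with h4 | h4
  · obtain ⟨V₁, hsub, hc4⟩ := Finset.exists_subset_card_eq h4
    refine ⟨a, k, V₁, hsub.trans (Finset.filter_subset _ _), hc4, ?_⟩
    intro p hp
    have hpS := hsub hp
    rw [hS₁, Finset.mem_filter] at hpS
    refine ⟨hpS.2, ?_⟩
    by_cases hpe : p = (a, b)
    · have hb : p.2 = b := by rw [hpe]
      show ¬ (p.2 - a).val < k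
      rw [hb]
      omega
    · rcases halt p hpS.1 hpe with ⟨_, h⟩ | ⟨_, h⟩
      · exact h
      · exact absurd hpS.2 h
  · obtain ⟨V₁, hsub, hc4⟩ := Finset.exists_subset_card_eq h4
    refine ⟨b, n - k, V₁, hsub.trans (Finset.filter_subset _ _), hc4, ?_⟩
    intro p hp
    have hpS := hsub hp
    rw [hS₂, Finset.mem_filter] at hpS
    have h1 : ¬ (p.1 - a).val < k := hpS.2
    have hpe : p ≠ (a, b) := by
      intro h
      rw [h] at h1
      simp [sub_self] at h1
      omega
    rcases halt p hpS.1 hpe with ⟨hx, hy⟩ | ⟨hx, hy⟩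
    · exact absurd hx h1
    · constructor
      · show (p.1 - b).val < n - k
        rw [harc]; omega
      · show ¬ (p.2 - b).val < n - k
        rw [harc]; omega
end

section
/- Let G be a digraph whose vertex set is the union of sets V₁, V₂ with common subset B = V₁ ∩ V₂, such that every arc of G lies entirely within V₁ or entirely within V₂. If σ₁ is a topological ordering of G[V₁] and σ₂ is a topological ordering of G[V₂] that agree on B (induce the same linear order on B), then G is acyclic and there is a topological ordering of G extending the common order on B. -/
open scoped Classical

section JoinAux

variable {V : Type*} [Fintype V]

/-- Number of elements of `B` whose `σ`-value is at most `σ v`. -/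
noncomputable def cntF (B : Set V) (σ : V → ℕ) (v : V) : ℕ :=
  (Finset.univ.filter fun x => x ∈ B ∧ σ x ≤ σ v).card

lemma cntF_mono (B : Set V) (σ : V → ℕ) {a b : V} (h : σ a ≤ σ b) :
    cntF B σ a ≤ cntF B σ b := by
  unfold cntF
  apply Finset.card_le_card
  intro x hx
  simp only [Finset.mem_filter] at hx ⊢
  exact ⟨hx.1, hx.2.1, hx.2.2.trans h⟩

lemma cntF_strict (B : Set V) (σ : V → ℕ) {a b : V} (hb : b ∈ B) (h : σ a < σ b) :
    cntF B σ a < cntF B σ b := by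
  unfold cntF
  apply Finset.card_lt_card
  refine ⟨?_, ?_⟩
  · intro x hx
    simp only [Finset.mem_filter] at hx ⊢
    exact ⟨hx.1, hx.2.1, hx.2.2.trans h.le⟩
  intro hsub
  have hbmem : b ∈ Finset.univ.filter fun x => x ∈ B ∧ σ x ≤ σ b :=
    Finset.mem_filter.mpr ⟨Finset.mem_univ b, hb, le_refl _⟩
  have := (Finset.mem_filter.mp (hsub hbmem)).2.2
  omega

lemma pack_lt {M a1 a2 b1 b2 : ℕ} (ha : a2 < M)
    (h : a1 < b1 ∨ (a1 = b1 ∧ a2 < b2)) : a1 * M + a2 < b1 * M + b2 := by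
  rcases h with h | ⟨rfl, h⟩
  · have h1 : (a1 + 1) * M = a1 * M + M := by ring
    have h2 : (a1 + 1) * M ≤ b1 * M := Nat.mul_le_mul_right M h
    omega
  · omega

lemma pack_eq {M a1 a2 b1 b2 : ℕ} (ha : a2 < M) (hb : b2 < M)
    (h : a1 * M + a2 = b1 * M + b2) : a1 = b1 ∧ a2 = b2 := by
  rcases lt_trichotomy a1 b1 with h' | h' | h'
  · have := pack_lt (b2 := b2) ha (Or.inl h'); omega
  · subst h'; omega
  · have := pack_lt (b2 := a2) hb (Or.inl h'); omega

/-- Rank of a vertex under a numeric key. -/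
noncomputable def rankF (f : V → ℕ) (v : V) : ℕ :=
  (Finset.univ.filter fun w => f w < f v).card

lemma rankF_lt (f : V → ℕ) {a b : V} (h : f a < f b) : rankF f a < rankF f b := by
  unfold rankF
  apply Finset.card_lt_card
  refine ⟨?_, ?_⟩
  · intro x hx
    simp only [Finset.mem_filter] at hx ⊢
    exact ⟨hx.1, hx.2.trans h⟩
  intro hsub
  have hamem : a ∈ Finset.univ.filter fun w => f w < f b :=
    Finset.mem_filter.mpr ⟨Finset.mem_univ a, h⟩
  have := (Finset.mem_filter.mp (hsub hamem)).2
  omega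

lemma rankF_le (f : V → ℕ) {a b : V} (h : f a ≤ f b) : rankF f a ≤ rankF f b := by
  unfold rankF
  apply Finset.card_le_card
  intro x hx
  simp only [Finset.mem_filter] at hx ⊢
  exact ⟨hx.1, lt_of_lt_of_le hx.2 h⟩

end JoinAux

/-- Join step correctness: if every arc of a finite digraph lies within `V₁` or within
`V₂` (where `V₁ ∪ V₂` is the whole vertex set), and `G[V₁]`, `G[V₂]` have topological
orderings agreeing on `B = V₁ ∩ V₂`, then `G` is acyclic and has a topological ordering
extending the common order on `B`. -/
theorem join_topological_orderings (V : Type*) [Fintype V] (E : V → V → Prop)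
    (V1 V2 : Set V) (hcover : V1 ∪ V2 = Set.univ)
    (harcs : ∀ a b, E a b → (a ∈ V1 ∧ b ∈ V1) ∨ (a ∈ V2 ∧ b ∈ V2))
    (σ1 σ2 : V → ℕ)
    (h1inj : Set.InjOn σ1 V1) (h1top : ∀ a ∈ V1, ∀ b ∈ V1, E a b → σ1 a < σ1 b)
    (h2inj : Set.InjOn σ2 V2) (h2top : ∀ a ∈ V2, ∀ b ∈ V2, E a b → σ2 a < σ2 b)
    (hagree : ∀ s ∈ V1 ∩ V2, ∀ t ∈ V1 ∩ V2, (σ1 s < σ1 t ↔ σ2 s < σ2 t)) :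
    (∀ v, ¬ Relation.TransGen E v v) ∧
    ∃ σ : V → ℕ, Function.Injective σ ∧ (∀ a b, E a b → σ a < σ b) ∧
      (∀ s ∈ V1 ∩ V2, ∀ t ∈ V1 ∩ V2, (σ s < σ t ↔ σ1 s < σ1 t)) := by
  classical
  have hmem2 : ∀ v : V, v ∉ V1 → v ∈ V2 := by
    intro v hv
    have h : v ∈ V1 ∪ V2 := by rw [hcover]; trivial
    exact h.resolve_left hv
  set M : ℕ := (Finset.univ.sup fun v => max (σ1 v) (σ2 v)) + 1 with hMdef
  have hM0 : 0 < M := by omega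
  have hM1 : ∀ v, σ1 v < M := by
    intro v
    have h : σ1 v ≤ Finset.univ.sup fun v => max (σ1 v) (σ2 v) :=
      le_trans (le_max_left _ _) (Finset.le_sup (f := fun v => max (σ1 v) (σ2 v)) (Finset.mem_univ v))
    omega
  have hM2 : ∀ v, σ2 v < M := by
    intro v
    have h : σ2 v ≤ Finset.univ.sup fun v => max (σ1 v) (σ2 v) :=
      le_trans (le_max_right _ _) (Finset.le_sup (f := fun v => max (σ1 v) (σ2 v)) (Finset.mem_univ v))
    omega
  set c : V → ℕ := fun v =>
    if v ∈ V1 then cntF (V1 ∩ V2) σ1 v else cntF (V1 ∩ V2) σ2 v with hcdef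
  set r : V → ℕ := fun v =>
    if v ∈ V1 ∩ V2 then 0 else if v ∈ V1 then M + σ1 v else 2 * M + σ2 v with hrdef
  set key : V → ℕ := fun v => c v * (3 * M) + r v with hkeydef
  -- the two counts agree on B
  have hA : ∀ v ∈ V1 ∩ V2, cntF (V1 ∩ V2) σ1 v = cntF (V1 ∩ V2) σ2 v := by
    intro v hv
    unfold cntF
    congr 1
    ext x
    simp only [Finset.mem_filter, Finset.mem_univ, true_and, and_congr_right_iff]
    intro hx
    constructor
    · intro hle
      by_contra hlt
      push_neg at hlt
      have := (hagree v hv x hx).mpr hlt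
      omega
    · intro hle
      by_contra hlt
      push_neg at hlt
      have := (hagree v hv x hx).mp hlt
      omega
  have hc1 : ∀ v ∈ V1, c v = cntF (V1 ∩ V2) σ1 v := by
    intro v hv; simp only [hcdef]; rw [if_pos hv]
  have hc2 : ∀ v ∈ V2, c v = cntF (V1 ∩ V2) σ2 v := by
    intro v hv
    simp only [hcdef]
    split_ifs with h
    · exact hA v ⟨h, hv⟩
    · rfl
  have hrbound : ∀ v, r v < 3 * M := by
    intro v
    have := hM1 v
    have := hM2 v
    simp only [hrdef]
    split_ifs <;> omega
  -- key is strictly increasing along arcs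
  have hkeylt : ∀ a b, E a b → key a < key b := by
    intro a b hab
    simp only [hkeydef]
    apply pack_lt (hrbound a)
    rcases harcs a b hab with ⟨ha, hb⟩ | ⟨ha, hb⟩
    · have hσ : σ1 a < σ1 b := h1top a ha b hb hab
      rw [hc1 a ha, hc1 b hb]
      by_cases hbB : b ∈ V1 ∩ V2
      · exact Or.inl (cntF_strict _ _ hbB hσ)
      · have hle := cntF_mono (V1 ∩ V2) σ1 hσ.le
        rcases hle.lt_or_eq with h | h
        · exact Or.inl h
        · refine Or.inr ⟨h, ?_⟩
          have hrb : r b = M + σ1 b := by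
            simp only [hrdef]; rw [if_neg hbB, if_pos hb]
          have hra : r a = 0 ∨ r a = M + σ1 a := by
            simp only [hrdef]
            split_ifs with h1
            · exact Or.inl rfl
            · exact Or.inr rfl
          rcases hra with hra | hra <;> omega
    · have hσ : σ2 a < σ2 b := h2top a ha b hb hab
      rw [hc2 a ha, hc2 b hb]
      by_cases hbB : b ∈ V1 ∩ V2
      · exact Or.inl (cntF_strict _ _ hbB hσ)
      · have hle := cntF_mono (V1 ∩ V2) σ2 hσ.le
        rcases hle.lt_or_eq with h | h
        · exact Or.inl h
        · refine Or.inr ⟨h, ?_⟩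
          have hrb : r b = 2 * M + σ2 b := by
            simp only [hrdef]
            rw [if_neg hbB, if_neg (fun h1 => hbB ⟨h1, hb⟩)]
          have hra : r a = 0 ∨ r a = 2 * M + σ2 a := by
            simp only [hrdef]
            split_ifs with h1 h2
            · exact Or.inl rfl
            · exact absurd ⟨h2, ha⟩ h1
            · exact Or.inr rfl
          rcases hra with hra | hra <;> omega
  -- key is injective
  have hkeyinj : ∀ a b : V, key a = key b → a = b := by
    intro a b h
    simp only [hkeydef] at h
    obtain ⟨hceq, hreq⟩ := pack_eq (hrbound a) (hrbound b) h
    by_cases haB : a ∈ V1 ∩ V2 <;> by_cases hbB : b ∈ V1 ∩ V2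
    · by_contra hne
      have hne1 : σ1 a ≠ σ1 b := fun he => hne (h1inj haB.1 hbB.1 he)
      rcases hne1.lt_or_gt with h' | h'
      · have := cntF_strict (V1 ∩ V2) σ1 hbB h'
        rw [← hc1 a haB.1, ← hc1 b hbB.1] at this; omega
      · have := cntF_strict (V1 ∩ V2) σ1 haB h'
        rw [← hc1 a haB.1, ← hc1 b hbB.1] at this; omega
    · exfalso
      have hra : r a = 0 := by simp only [hrdef]; rw [if_pos haB]
      have hrb : M ≤ r b := by
        simp only [hrdef]; rw [if_neg hbB]; split_ifs <;> omega
      omega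
    · exfalso
      have hrb : r b = 0 := by simp only [hrdef]; rw [if_pos hbB]
      have hra : M ≤ r a := by
        simp only [hrdef]; rw [if_neg haB]; split_ifs <;> omega
      omega
    · by_cases ha1 : a ∈ V1 <;> by_cases hb1 : b ∈ V1
      · have hra : r a = M + σ1 a := by simp only [hrdef]; rw [if_neg haB, if_pos ha1]
        have hrb : r b = M + σ1 b := by simp only [hrdef]; rw [if_neg hbB, if_pos hb1]
        exact h1inj ha1 hb1 (by omega)
      · exfalso
        have hra : r a = M + σ1 a := by simp only [hrdef]; rw [if_neg haB, if_pos ha1]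
        have hrb : r b = 2 * M + σ2 b := by
          simp only [hrdef]; rw [if_neg hbB, if_neg hb1]
        have := hM1 a
        omega
      · exfalso
        have hra : r a = 2 * M + σ2 a := by
          simp only [hrdef]; rw [if_neg haB, if_neg ha1]
        have hrb : r b = M + σ1 b := by simp only [hrdef]; rw [if_neg hbB, if_pos hb1]
        have := hM1 b
        omega
      · have hra : r a = 2 * M + σ2 a := by
          simp only [hrdef]; rw [if_neg haB, if_neg ha1]
        have hrb : r b = 2 * M + σ2 b := by
          simp only [hrdef]; rw [if_neg hbB, if_neg hb1]
        exact h2inj (hmem2 a ha1) (hmem2 b hb1) (by omega)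
  have hσlt : ∀ a b, E a b → rankF key a < rankF key b :=
    fun a b h => rankF_lt key (hkeylt a b h)
  have htrans : ∀ x y : V, Relation.TransGen E x y → rankF key x < rankF key y := by
    intro x y h
    induction h with
    | single h => exact hσlt _ _ h
    | tail _ h ih => exact ih.trans (hσlt _ _ h)
  constructor
  · intro v hv
    exact absurd (htrans v v hv) (lt_irrefl _)
  · refine ⟨rankF key, ?_, hσlt, ?_⟩
    · intro a b hab
      by_contra hne
      have hkne : key a ≠ key b := fun he => hne (hkeyinj _ _ he)
      rcases hkne.lt_or_gt with h | h
      · have := rankF_lt key h; omega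
      · have := rankF_lt key h; omega
    · intro s hs t ht
      have hrs : r s = 0 := by simp only [hrdef]; rw [if_pos hs]
      have hrt : r t = 0 := by simp only [hrdef]; rw [if_pos ht]
      have hcs : c s = cntF (V1 ∩ V2) σ1 s := hc1 s hs.1
      have hct : c t = cntF (V1 ∩ V2) σ1 t := hc1 t ht.1
      constructor
      · intro h
        have hk : key s < key t := by
          by_contra hk
          push_neg at hk
          have := rankF_le key hk
          omega
        have hcc : c s < c t := by
          simp only [hkeydef] at hk
          rw [hrs, hrt] at hk
          by_contra hx
          push_neg at hx
          have := Nat.mul_le_mul_right (3 * M) hx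
          omega
        by_contra hx
        push_neg at hx
        have := cntF_mono (V1 ∩ V2) σ1 hx
        rw [← hcs, ← hct] at this
        omega
      · intro h
        have hcc : c s < c t := by
          rw [hcs, hct]; exact cntF_strict _ _ ht h
        exact rankF_lt key (by simp only [hkeydef]; exact pack_lt (hrbound s) (Or.inl hcc))
end

section
/- Let k ≥ 3 and let F be a family of 'thin' subsets of [k] × [k] (each set contains at most one element per row). Suppose there exists X ⊆ [k] × [k] containing exactly one element from each row i ∈ [k] such that X ∩ F ≠ ∅ for every F ∈ F. Then there is a permutation σ of [2k+1] such that: σ orders k+1, k+2, …, 2k+1 increasingly; σ places each i ∈ [k] between σ(k+1) and σ(2k+1); and for every F ∈ F there exists (i,j) ∈ F with σ(k+j) < σ(i) < σ(k+j+1). Conversely, the existence of such a permutation implies the existence of such a hitting set X. -/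
/-- The element of `Fin (2k+1)` with value `m` (for `m ≤ 2k`). -/
def pos (k m : ℕ) : Fin (2 * k + 1) := ⟨m % (2 * k + 1), Nat.mod_lt _ (Nat.succ_pos _)⟩

/-- The embedding of a row index `i ∈ [k]` into `Fin (2k+1)`. -/
def rowIdx (k : ℕ) (i : Fin k) : Fin (2 * k + 1) := Fin.castLE (by omega) i

/-!
Positions `k, …, 2k` act as walls cutting the line into `k` gaps, and a hitting set `X` is
encoded by putting row `i` into gap `X i`: sorting by the key (gap, row) yields `σ`.
Conversely, increasing walls make the gaps disjoint, so each row lies in at most one gap and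
`X i` is read off as that gap.
-/

open Function

theorem Tuple.sort_symm_lt_iff {n : ℕ} {β : Type*} [LinearOrder β] {f : Fin n → β}
    (hf : Injective f) (x y : Fin n) :
    (Tuple.sort f).symm x < (Tuple.sort f).symm y ↔ f x < f y := by
  have hmono : StrictMono (f ∘ Tuple.sort f) :=
    (Tuple.monotone_sort f).strictMono_of_injective (hf.comp (Tuple.sort f).injective)
  simpa using (hmono.lt_iff_lt (a := (Tuple.sort f).symm x) (b := (Tuple.sort f).symm y)).symm

theorem StrictMonoOn.eq_of_mem_Ioo_of_mem_Ioo {α : Type*} [Preorder α] {w : ℕ → α} {a b : ℕ}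
    (hw : StrictMonoOn w (Set.Icc a b)) {j j' : ℕ} (hj : a ≤ j) (hj' : a ≤ j')
    (hjb : j + 1 ≤ b) (hjb' : j' + 1 ≤ b) {x : α}
    (hx : x ∈ Set.Ioo (w j) (w (j + 1))) (hx' : x ∈ Set.Ioo (w j') (w (j' + 1))) : j = j' := by
  wlog hlt : j < j' generalizing j j'
  · rcases (not_lt.1 hlt).eq_or_lt with h | h
    · exact h.symm
    · exact (this hj' hj hjb' hjb hx' hx h).symm
  have : w (j + 1) ≤ w j' :=
    (hw.le_iff_le ⟨by omega, hjb⟩ ⟨hj', by omega⟩).2 hlt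
  exact absurd (hx.2.trans_le this |>.trans hx'.1) (lt_irrefl x)

theorem exists_eq_of_right_unique {α : Type*} (R : α → α → Prop)
    (hR : ∀ i j j', R i j → R i j' → j = j') : ∃ X : α → α, ∀ i j, R i j → X i = j := by
  classical
  refine ⟨fun i => if h : ∃ j, R i j then h.choose else i, fun i j hij => ?_⟩
  have hex : ∃ j, R i j := ⟨j, hij⟩
  simpa only [dif_pos hex] using hR i _ _ hex.choose_spec hij

theorem pos_val {k m : ℕ} (hm : m ≤ 2 * k) : (pos k m).val = m :=
  Nat.mod_eq_of_lt (by omega)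

section Forward

variable {k : ℕ} (X : Fin k → Fin k)

/-- Wall `k + j` gets key `(j, 0)` and row `i` gets key `(X i, i + 1)`, so every row sits
strictly between the walls `k + X i` and `k + X i + 1`. -/
def slotKey (x : Fin (2 * k + 1)) : ℕ ×ₗ ℕ :=
  if h : x.val < k then toLex ((X ⟨x, h⟩).val, x.val + 1) else toLex (x.val - k, 0)

theorem slotKey_pos {m : ℕ} (hkm : k ≤ m) (hm : m ≤ 2 * k) :
    slotKey X (pos k m) = toLex (m - k, 0) := by
  rw [slotKey, dif_neg (by rw [pos_val hm]; omega), pos_val hm]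

theorem slotKey_rowIdx (i : Fin k) : slotKey X (rowIdx k i) = toLex ((X i).val, i.val + 1) :=
  dif_pos i.isLt

theorem slotKey_injective : Injective (slotKey X) := by
  intro x y h
  unfold slotKey at h
  split_ifs at h <;> simp only [toLex_inj, Prod.mk.injEq] at h <;> exact Fin.ext (by omega)

end Forward

theorem hittingSet_iff_permutation_general (k : ℕ)
    (F : Finset (Finset (Fin k × Fin k))) :
    (∃ X : Fin k → Fin k, ∀ S ∈ F, ∃ i : Fin k, (i, X i) ∈ S) ↔
    (∃ σ : Equiv.Perm (Fin (2 * k + 1)),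
      (∀ m1 m2 : ℕ, k ≤ m1 → m1 < m2 → m2 ≤ 2 * k → σ (pos k m1) < σ (pos k m2)) ∧
      (∀ i : Fin k, σ (pos k k) < σ (rowIdx k i) ∧ σ (rowIdx k i) < σ (pos k (2 * k))) ∧
      (∀ S ∈ F, ∃ i j : Fin k, (i, j) ∈ S ∧
        σ (pos k (k + j.val)) < σ (rowIdx k i) ∧
        σ (rowIdx k i) < σ (pos k (k + j.val + 1)))) := by
  constructor
  · rintro ⟨X, hX⟩
    have hσ := Tuple.sort_symm_lt_iff (slotKey_injective X)
    refine ⟨(Tuple.sort (slotKey X)).symm, fun m1 m2 h1 h12 h2 => ?_, fun i => ?_, fun S hS => ?_⟩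
    · rw [hσ, slotKey_pos X h1 (by omega), slotKey_pos X (by omega) h2, Prod.Lex.toLex_lt_toLex]
      omega
    · have := (X i).isLt
      rw [hσ, hσ, slotKey_pos X le_rfl (by omega), slotKey_pos X (by omega) le_rfl,
        slotKey_rowIdx, Prod.Lex.toLex_lt_toLex, Prod.Lex.toLex_lt_toLex]
      omega
    · obtain ⟨i, hi⟩ := hX S hS
      have := (X i).isLt
      refine ⟨i, X i, hi, ?_⟩
      rw [hσ, hσ, slotKey_pos X (by omega) (by omega), slotKey_pos X (by omega) (by omega),
        slotKey_rowIdx, Prod.Lex.toLex_lt_toLex, Prod.Lex.toLex_lt_toLex]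
      omega
  · rintro ⟨σ, hwalls, -, hgaps⟩
    have hmono : StrictMonoOn (fun m => σ (pos k m)) (Set.Icc k (2 * k)) :=
      fun m1 h1 m2 h2 h12 => hwalls m1 m2 h1.1 h12 h2.2
    obtain ⟨X, hX⟩ := exists_eq_of_right_unique
      (fun i j : Fin k => σ (rowIdx k i) ∈ Set.Ioo (σ (pos k (k + j))) (σ (pos k (k + j + 1))))
      fun i j j' h h' => Fin.ext <| Nat.add_left_cancel <|
        hmono.eq_of_mem_Ioo_of_mem_Ioo (by omega) (by omega) (by omega) (by omega) h h'
    refine ⟨X, fun S hS => ?_⟩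
    obtain ⟨i, j, hij, hgap⟩ := hgaps S hS
    exact ⟨i, hX i j hgap ▸ hij⟩

/-- Correctness of the reduction from `k×k` Hitting Set with thin sets to permutation
constraints: a hitting set picking one element per row exists iff there is a permutation
`σ` of `[2k+1]` (0-based: `Fin (2k+1)`) ordering the last `k+1` positions increasingly,
placing each row index between the first and last of them, and such that for each set
`S ∈ F` some `(i,j) ∈ S` has `i` placed between positions `k+j` and `k+j+1`. -/
theorem hittingSet_iff_permutation (k : ℕ) (hk : 3 ≤ k)
    (F : Finset (Finset (Fin k × Fin k)))
    (hthin : ∀ S ∈ F, ∀ i j j' : Fin k, (i, j) ∈ S → (i, j') ∈ S → j = j') :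
    (∃ X : Fin k → Fin k, ∀ S ∈ F, ∃ i : Fin k, (i, X i) ∈ S) ↔
    (∃ σ : Equiv.Perm (Fin (2 * k + 1)),
      (∀ m1 m2 : ℕ, k ≤ m1 → m1 < m2 → m2 ≤ 2 * k → σ (pos k m1) < σ (pos k m2)) ∧
      (∀ i : Fin k, σ (pos k k) < σ (rowIdx k i) ∧ σ (rowIdx k i) < σ (pos k (2 * k))) ∧
      (∀ S ∈ F, ∃ i j : Fin k, (i, j) ∈ S ∧
        σ (pos k (k + j.val)) < σ (rowIdx k i) ∧
        σ (rowIdx k i) < σ (pos k (k + j.val + 1)))) :=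
  hittingSet_iff_permutation_general k F
end
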